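/- Let (M, μ) and (N, ν) be measure spaces and let T1, T2 : N → M be measure-preserving maps; let S1, S2 : L²(M, μ; ℝ) → L²(N, ν; ℝ) denote the induced composition operators (which are linear isometries). Let R ⊆ M be measurable with 0 < μ(R) < ∞ and set P_l = T_l⁻¹(R) for l = 1, 2. Let (b^M_i)_{i∈ℕ} and (b^N_j)_{j∈ℕ} be Hilbert bases of L²(M, μ; ℝ) and L²(N, ν; ℝ), fix k_M, k_N ∈ ℕ and ε, δ ≥ 0, let f ∈ L²(M) be the class of the indicator 1_R and g = S1 f − S2 f ∈ L²(N) (the class of 1_{P1} − 1_{P2}). Assume ‖f − ∑_{i < k_M} ⟪b^M_i, f⟫ b^M_i‖² ≤ ε · μ(R) and ‖g − ∑_{j < k_N} ⟪b^N_j, g⟫ b^N_j‖² ≤ δ · ν(P1 Δ P2). Define the k_N × k_M real matrices C_l by C_l(j, i) = ⟪b^N_j, S_l(b^M_i)⟫ for l = 1, 2. Then the Frobenius norm satisfies √(∑_{j < k_N} ∑_{i < k_M} (C_1(j,i) − C_2(j,i))²) ≥ √(ν(P1 Δ P2)) · (1 − √δ) / √(μ(R)) − 2·√ε. -/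

import Mathlib

/-! With `P` the truncated expansion in the first `k` basis vectors and `D = S1 - S2`, split
`P_N g = P_N D (P_M f) + P_N D (f - P_M f)`. By Cauchy–Schwarz in coordinates the first term has
norm at most `‖C₁ - C₂‖_F ‖f‖`, and the second at most `2 ‖f - P_M f‖` because `D` is a
difference of isometries. Since `‖g‖ ≤ ‖P_N g‖ + ‖g - P_N g‖`, `‖f‖² = μ(R)` and
`‖g‖² = ν(P₁ Δ P₂)` (as `g` is a.e. `1_{P₁} - 1_{P₂}`), the bound follows. -/

open MeasureTheory Finset
open scoped InnerProductSpace

theorem LinearIsometry.norm_apply_sub_apply_le {R E F : Type*} [Semiring R]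
    [SeminormedAddCommGroup E] [SeminormedAddCommGroup F] [Module R E] [Module R F]
    (S₁ S₂ : E →ₗᵢ[R] F) (x : E) : ‖S₁ x - S₂ x‖ ≤ 2 * ‖x‖ := by
  calc ‖S₁ x - S₂ x‖ ≤ ‖S₁ x‖ + ‖S₂ x‖ := norm_sub_le _ _
    _ = 2 * ‖x‖ := by rw [S₁.norm_map, S₂.norm_map, two_mul]

section Truncation

variable {ι κ E F : Type*} [NormedAddCommGroup E] [InnerProductSpace ℝ E]
  [NormedAddCommGroup F] [InnerProductSpace ℝ F]

def truncation (b : ι → E) (s : Finset ι) (x : E) : E := ∑ i ∈ s, ⟪b i, x⟫_ℝ • b i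

theorem truncation_add (b : ι → E) (s : Finset ι) (x y : E) :
    truncation b s (x + y) = truncation b s x + truncation b s y := by
  simp only [truncation, inner_add_right, add_smul, sum_add_distrib]

variable {b : ι → E}

theorem Orthonormal.norm_truncation_sq (hb : Orthonormal ℝ b) (s : Finset ι) (x : E) :
    ‖truncation b s x‖ ^ 2 = ∑ i ∈ s, ⟪b i, x⟫_ℝ ^ 2 := by
  rw [← real_inner_self_eq_norm_sq, truncation, hb.inner_sum]
  simp only [conj_trivial, sq]

theorem Orthonormal.norm_truncation_le (hb : Orthonormal ℝ b) (s : Finset ι) (x : E) :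
    ‖truncation b s x‖ ≤ ‖x‖ := by
  rw [← sq_le_sq₀ (norm_nonneg _) (norm_nonneg _), hb.norm_truncation_sq]
  simpa only [Real.norm_eq_abs, sq_abs] using hb.sum_inner_products_le (s := s) x

theorem Orthonormal.norm_truncation_map_truncation_le {c : κ → F} (hb : Orthonormal ℝ b)
    (hc : Orthonormal ℝ c) (A : E →ₗ[ℝ] F) (s : Finset ι) (t : Finset κ) (x : E) :
    ‖truncation c t (A (truncation b s x))‖
      ≤ √(∑ j ∈ t, ∑ i ∈ s, ⟪c j, A (b i)⟫_ℝ ^ 2) * ‖x‖ := by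
  have hcoeff (j : κ) :
      ⟪c j, A (truncation b s x)⟫_ℝ = ∑ i ∈ s, ⟪b i, x⟫_ℝ * ⟪c j, A (b i)⟫_ℝ := by
    simp only [truncation, map_sum, map_smul, inner_sum, inner_smul_right]
  have hsq : ‖truncation c t (A (truncation b s x))‖ ^ 2
      ≤ (∑ j ∈ t, ∑ i ∈ s, ⟪c j, A (b i)⟫_ℝ ^ 2) * ‖x‖ ^ 2 :=
    calc ‖truncation c t (A (truncation b s x))‖ ^ 2
        = ∑ j ∈ t, (∑ i ∈ s, ⟪b i, x⟫_ℝ * ⟪c j, A (b i)⟫_ℝ) ^ 2 := by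
          simp only [hc.norm_truncation_sq, hcoeff]
      _ ≤ ∑ j ∈ t, (∑ i ∈ s, ⟪b i, x⟫_ℝ ^ 2) * ∑ i ∈ s, ⟪c j, A (b i)⟫_ℝ ^ 2 :=
          sum_le_sum fun j _ => sum_mul_sq_le_sq_mul_sq _ _ _
      _ = ‖truncation b s x‖ ^ 2 * ∑ j ∈ t, ∑ i ∈ s, ⟪c j, A (b i)⟫_ℝ ^ 2 := by
          rw [← mul_sum, hb.norm_truncation_sq]
      _ ≤ ‖x‖ ^ 2 * ∑ j ∈ t, ∑ i ∈ s, ⟪c j, A (b i)⟫_ℝ ^ 2 := by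
          gcongr
          exact hb.norm_truncation_le s x
      _ = _ := mul_comm _ _
  rw [← Real.sqrt_sq (norm_nonneg x), ← Real.sqrt_mul' _ (sq_nonneg _)]
  exact Real.le_sqrt_of_sq_le hsq

theorem Orthonormal.norm_apply_sub_apply_le_frobenius_add {c : κ → F} (hb : Orthonormal ℝ b)
    (hc : Orthonormal ℝ c) (S₁ S₂ : E →ₗᵢ[ℝ] F) (s : Finset ι) (t : Finset κ) (x : E) :
    ‖S₁ x - S₂ x‖
      ≤ √(∑ j ∈ t, ∑ i ∈ s, (⟪c j, S₁ (b i)⟫_ℝ - ⟪c j, S₂ (b i)⟫_ℝ) ^ 2) * ‖x‖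
        + 2 * ‖x - truncation b s x‖
        + ‖(S₁ x - S₂ x) - truncation c t (S₁ x - S₂ x)‖ := by
  let D : E →ₗ[ℝ] F := S₁.toLinearMap - S₂.toLinearMap
  have hD (y : E) : D y = S₁ y - S₂ y := rfl
  have hsplit : truncation c t (D x)
      = truncation c t (D (truncation b s x)) + truncation c t (D (x - truncation b s x)) := by
    rw [← truncation_add, ← map_add, add_sub_cancel]
  have hmain := hb.norm_truncation_map_truncation_le hc D s t x
  simp only [hD, inner_sub_right] at hmain
  have htail : ‖truncation c t (D (x - truncation b s x))‖ ≤ 2 * ‖x - truncation b s x‖ :=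
    (hc.norm_truncation_le t _).trans (S₁.norm_apply_sub_apply_le S₂ _)
  calc ‖D x‖ ≤ ‖truncation c t (D x)‖ + ‖D x - truncation c t (D x)‖ := norm_le_insert' _ _
    _ ≤ ‖truncation c t (D (truncation b s x))‖ + ‖truncation c t (D (x - truncation b s x))‖
          + ‖D x - truncation c t (D x)‖ := by
        gcongr
        exact hsplit ▸ norm_add_le _ _
    _ ≤ _ := add_le_add (add_le_add hmain htail) le_rfl

end Truncation

theorem sq_indicator_one_sub_indicator_one {α R : Type*} [Ring R] (s t : Set α) (x : α) :
    (s.indicator (1 : α → R) x - t.indicator 1 x) ^ 2 = (symmDiff s t).indicator 1 x := by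
  by_cases hs : x ∈ s <;> by_cases ht : x ∈ t <;> simp [hs, ht, Set.mem_symmDiff]

theorem MeasureTheory.L2.norm_eq_sqrt_measureReal_of_sq_ae_eq_indicator {α : Type*}
    [MeasurableSpace α] {μ : Measure α} {s : Set α} (hs : MeasurableSet s) {h : Lp ℝ 2 μ}
    (hh : (fun a => h a ^ 2) =ᵐ[μ] s.indicator 1) : ‖h‖ = √(μ.real s) := by
  rw [← integral_indicator_one hs, ← integral_congr_ae hh, ← Real.sqrt_sq (norm_nonneg h),
    ← real_inner_self_eq_norm_sq, L2.inner_def]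
  simp only [real_inner_self_eq_norm_sq, Real.norm_eq_abs, sq_abs]

theorem frobenius_sub_functionalMap_ge_general
    {M N : Type*} [MeasurableSpace M] [MeasurableSpace N]
    (μ : Measure M) (ν : Measure N)
    (T1 T2 : N → M) (hT1 : MeasurePreserving T1 ν μ) (hT2 : MeasurePreserving T2 ν μ)
    (S1 S2 : Lp ℝ 2 μ →ₗᵢ[ℝ] Lp ℝ 2 ν)
    (hS1 : ∀ h : Lp ℝ 2 μ, (S1 h : N → ℝ) =ᵐ[ν] fun x => h (T1 x))
    (hS2 : ∀ h : Lp ℝ 2 μ, (S2 h : N → ℝ) =ᵐ[ν] fun x => h (T2 x))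
    (R : Set M) (hR : MeasurableSet R)
    (bM : HilbertBasis ℕ ℝ (Lp ℝ 2 μ)) (bN : HilbertBasis ℕ ℝ (Lp ℝ 2 ν))
    (kM kN : ℕ) (ε δ : ℝ)
    (f : Lp ℝ 2 μ) (hf : (f : M → ℝ) =ᵐ[μ] R.indicator fun _ => (1 : ℝ))
    (g : Lp ℝ 2 ν) (hg : g = S1 f - S2 f)
    (hfapprox : ‖f - ∑ i ∈ Finset.range kM, (inner ℝ (bM i) f : ℝ) • bM i‖ ^ 2
        ≤ ε * (μ R).toReal)
    (hgapprox : ‖g - ∑ j ∈ Finset.range kN, (inner ℝ (bN j) g : ℝ) • bN j‖ ^ 2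
        ≤ δ * (ν (symmDiff (T1 ⁻¹' R) (T2 ⁻¹' R))).toReal) :
    Real.sqrt (∑ j : Fin kN, ∑ i : Fin kM,
        ((inner ℝ (bN (j : ℕ)) (S1 (bM (i : ℕ))) : ℝ)
          - (inner ℝ (bN (j : ℕ)) (S2 (bM (i : ℕ))) : ℝ)) ^ 2)
      ≥ Real.sqrt (ν (symmDiff (T1 ⁻¹' R) (T2 ⁻¹' R))).toReal * (1 - Real.sqrt δ)
          / Real.sqrt (μ R).toReal - 2 * Real.sqrt ε := by
  subst hg
  have hsqrt {x a b : ℝ} (hb : 0 ≤ b) (h : x ^ 2 ≤ a * b) : x ≤ √a * √b :=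
    Real.sqrt_mul' a hb ▸ Real.le_sqrt_of_sq_le h
  have hg_ae : ⇑(S1 f - S2 f) =ᵐ[ν]
      fun x => (T1 ⁻¹' R).indicator 1 x - (T2 ⁻¹' R).indicator 1 x := by
    filter_upwards [Lp.coeFn_sub (S1 f) (S2 f), hS1 f, hS2 f,
      hT1.quasiMeasurePreserving.ae_eq_comp hf, hT2.quasiMeasurePreserving.ae_eq_comp hf]
      with x hx h1 h2 h3 h4
    rw [hx, Pi.sub_apply, h1, h2]
    exact congr_arg₂ _ h3 h4
  have hfnorm : ‖f‖ = √(μ R).toReal :=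
    L2.norm_eq_sqrt_measureReal_of_sq_ae_eq_indicator hR <| hf.mono fun x hx => by
      by_cases hxR : x ∈ R <;> simp [hx, hxR]
  have hgnorm : ‖S1 f - S2 f‖ = √(ν (symmDiff (T1 ⁻¹' R) (T2 ⁻¹' R))).toReal :=
    L2.norm_eq_sqrt_measureReal_of_sq_ae_eq_indicator
      ((hT1.measurable hR).symmDiff (hT2.measurable hR)) <| hg_ae.mono fun x hx => by
        simp only [hx, sq_indicator_one_sub_indicator_one]
  have hfk : ‖f - truncation bM (range kM) f‖ ≤ √ε * √(μ R).toReal :=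
    hsqrt ENNReal.toReal_nonneg hfapprox
  have hgk : ‖(S1 f - S2 f) - truncation bN (range kN) (S1 f - S2 f)‖
      ≤ √δ * √(ν (symmDiff (T1 ⁻¹' R) (T2 ⁻¹' R))).toReal :=
    hsqrt ENNReal.toReal_nonneg hgapprox
  have key := bM.orthonormal.norm_apply_sub_apply_le_frobenius_add bN.orthonormal S1 S2
    (range kM) (range kN) f
  simp only [Finset.sum_range, hfnorm, hgnorm] at key
  rw [ge_iff_le, sub_le_iff_le_add]
  refine div_le_of_le_mul₀ (Real.sqrt_nonneg _) (by positivity) ?_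
  linarith

/-- Main lower-bound result of Appendix B: two measure-preserving pointwise maps whose
pre-images of some region `R` differ on a set of large measure must have different
low-frequency functional map submatrices.  Here `S1, S2` are the composition (pull-back)
operators, which are linear isometries of `L²`, `bM`, `bN` are Hilbert bases,
`f` is the class of the indicator of `R`, `g = S1 f − S2 f`, and the hypotheses state that
`f` (resp. `g`) is captured by the first `kM` (resp. `kN`) basis functions up to relative
error `ε` (resp. `δ`).  The conclusion bounds the Frobenius norm of the difference of the
leading `kN × kM` functional map submatrices from below. -/
theorem frobenius_sub_functionalMap_ge
    {M N : Type*} [MeasurableSpace M] [MeasurableSpace N]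
    (μ : Measure M) (ν : Measure N)
    (T1 T2 : N → M) (hT1 : MeasurePreserving T1 ν μ) (hT2 : MeasurePreserving T2 ν μ)
    (S1 S2 : Lp ℝ 2 μ →ₗᵢ[ℝ] Lp ℝ 2 ν)
    (hS1 : ∀ h : Lp ℝ 2 μ, (S1 h : N → ℝ) =ᵐ[ν] fun x => h (T1 x))
    (hS2 : ∀ h : Lp ℝ 2 μ, (S2 h : N → ℝ) =ᵐ[ν] fun x => h (T2 x))
    (R : Set M) (hR : MeasurableSet R) (hRpos : 0 < μ R) (hRfin : μ R < ⊤)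
    (bM : HilbertBasis ℕ ℝ (Lp ℝ 2 μ)) (bN : HilbertBasis ℕ ℝ (Lp ℝ 2 ν))
    (kM kN : ℕ) (ε δ : ℝ) (hε : 0 ≤ ε) (hδ : 0 ≤ δ)
    (f : Lp ℝ 2 μ) (hf : (f : M → ℝ) =ᵐ[μ] R.indicator fun _ => (1 : ℝ))
    (g : Lp ℝ 2 ν) (hg : g = S1 f - S2 f)
    (hfapprox : ‖f - ∑ i ∈ Finset.range kM, (inner ℝ (bM i) f : ℝ) • bM i‖ ^ 2
        ≤ ε * (μ R).toReal)
    (hgapprox : ‖g - ∑ j ∈ Finset.range kN, (inner ℝ (bN j) g : ℝ) • bN j‖ ^ 2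
        ≤ δ * (ν (symmDiff (T1 ⁻¹' R) (T2 ⁻¹' R))).toReal) :
    Real.sqrt (∑ j : Fin kN, ∑ i : Fin kM,
        ((inner ℝ (bN (j : ℕ)) (S1 (bM (i : ℕ))) : ℝ)
          - (inner ℝ (bN (j : ℕ)) (S2 (bM (i : ℕ))) : ℝ)) ^ 2)
      ≥ Real.sqrt (ν (symmDiff (T1 ⁻¹' R) (T2 ⁻¹' R))).toReal * (1 - Real.sqrt δ)
          / Real.sqrt (μ R).toReal - 2 * Real.sqrt ε :=
  frobenius_sub_functionalMap_ge_general μ ν T1 T2 hT1 hT2 S1 S2 hS1 hS2 R hR bM bN kM kN ε δ f hf g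
    hg hfapprox hgapprox
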